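/- arXiv:1612.06332 — 3 statements merged into one kernel-verified Lean document; each statement's English description precedes it below -/
import Mathlib

section
/- Every polytope X is equal to the intersection of its tangent cones at vertices: X = ⋂_{v ∈ vert(X)} C_v(X), where C_v(X) = v + cone{x - v : x adjacent vertex of v}. -/
/-!
If `q ∉ X`, separate `q` from `X` by a functional `l` and take a vertex `v` maximising `l`: every
edge direction at `v` has `l ≤ 0`, so the tangent cone at `v` lies in `l ≤ l v` and misses `q`.
Conversely, `X - v` lies in the cone over the vertex figure at `v`, the central projection of the
other vertices onto a hyperplane cutting off `v`. Each vertex of the vertex figure is the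
projection of a neighbour `u` of `v`: a functional exposing it in the figure, corrected by a
multiple of the functional exposing `v`, is maximised on `X` exactly on the segment `[v, u]`.
-/

open Set Finset

/-- A polytope: convex hull of finitely many points. -/
def IsPolytope {n : ℕ} (X : Set (Fin n → ℝ)) : Prop :=
  ∃ V : Finset (Fin n → ℝ), X = convexHull ℝ (V : Set (Fin n → ℝ))

/-- Affine dimension of a set. -/
noncomputable def adim {n : ℕ} (S : Set (Fin n → ℝ)) : ℕ :=
  Module.finrank ℝ (vectorSpan ℝ S)

/-- `F` is a facet of `X`: an exposed face of affine dimension one less than `X`. -/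
def IsFacet {n : ℕ} (X F : Set (Fin n → ℝ)) : Prop :=
  IsExposed ℝ X F ∧ adim F + 1 = adim X

/-- Two vertices of `X` are adjacent if the segment joining them is an exposed face. -/
def AdjVert {n : ℕ} (X : Set (Fin n → ℝ)) (u v : Fin n → ℝ) : Prop :=
  u ≠ v ∧ u ∈ X.extremePoints ℝ ∧ v ∈ X.extremePoints ℝ ∧
    IsExposed ℝ X (segment ℝ u v)

/-- The convex cone generated by a set: all nonnegative multiples of convex combinations. -/
def coneHull {n : ℕ} (S : Set (Fin n → ℝ)) : Set (Fin n → ℝ) :=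
  {0} ∪ {p | ∃ c : ℝ, 0 ≤ c ∧ ∃ z ∈ convexHull ℝ S, p = c • z}

/-- The tangent cone of `X` at a vertex `v`:
`v + cone{x - v : x an adjacent vertex of v}`. -/
def tangentCone {n : ℕ} (X : Set (Fin n → ℝ)) (v : Fin n → ℝ) : Set (Fin n → ℝ) :=
  {p | ∃ y ∈ coneHull {z | ∃ x, AdjVert X v x ∧ z = x - v}, p = v + y}

/-- The graph (1-skeleton) of a polytope `X`, with the vertices of `X` as nodes. -/
def polyGraph {n : ℕ} (X : Set (Fin n → ℝ)) : SimpleGraph (Fin n → ℝ) where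
  Adj := AdjVert X
  symm := by
    constructor
    intro u v h
    refine ⟨h.1.symm, h.2.2.1, h.2.1, ?_⟩
    rw [segment_symm]; exact h.2.2.2
  loopless := by constructor; intro u h; exact h.1 rfl

/-- Real point corresponding to an integer point. -/
def toR {d : ℕ} (x : Fin d → ℤ) : Fin d → ℝ := fun i => (x i : ℝ)

/-- Lexicographic order comparing from the last coordinate. -/
def lexLe {d : ℕ} (x y : Fin d → ℤ) : Prop :=
  x = y ∨ ∃ i : Fin d, x i < y i ∧ ∀ k : Fin d, i < k → x k = y k

/-- Graded lexicographic order. -/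
def grlexLe {d : ℕ} (x y : Fin d → ℤ) : Prop :=
  (∑ i, x i) < (∑ i, y i) ∨ ((∑ i, x i) = (∑ i, y i) ∧ lexLe x y)

/-- Graded reverse lexicographic order. -/
def grevlexLe {d : ℕ} (x y : Fin d → ℤ) : Prop :=
  (∑ i, x i) < (∑ i, y i) ∨ ((∑ i, x i) = (∑ i, y i) ∧ lexLe y x)

/-- The grlex polytope `P = conv{x ∈ ℤᵈ : 0 ≤ x ≼_grlex θ}`. -/
def grlexP (d : ℕ) (θ : Fin d → ℤ) : Set (Fin d → ℝ) :=
  convexHull ℝ {p | ∃ x : Fin d → ℤ, (∀ i, 0 ≤ x i) ∧ grlexLe x θ ∧ p = toR x}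

/-- The grevlex polytope `Q = conv{x ∈ ℤᵈ : 0 ≤ x ≼_grevlex θ}`. -/
def grevlexQ (d : ℕ) (θ : Fin d → ℤ) : Set (Fin d → ℝ) :=
  convexHull ℝ {p | ∃ x : Fin d → ℤ, (∀ i, 0 ≤ x i) ∧ grevlexLe x θ ∧ p = toR x}

/-- `b`, the total sum of `θ`. -/
def bsum {d : ℕ} (θ : Fin d → ℤ) : ℤ := ∑ i, θ i

/-- `b̃ₖ`, the sum of the first `k` coordinates of `θ` (`k` is 1-indexed). -/
def btil {d : ℕ} (θ : Fin d → ℤ) (k : ℕ) : ℤ :=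
  ∑ i ∈ Finset.univ.filter (fun i : Fin d => (i : ℕ) < k), θ i

/-- The vertex `w = (b-1)e_d` of `P`. -/
def wP (d : ℕ) (θ : Fin d → ℤ) : Fin d → ℤ :=
  fun i => if (i : ℕ) = d - 1 then bsum θ - 1 else 0

/-- The vertex `u^k = ((b̃_{k-1}+1)e_{k-1}, θ_k - 1, θ_{k+1}, …, θ_d)` of `P` (paper's
1-indexing: coordinate `j` of the paper is index `j-1` here). -/
def uP (d : ℕ) (θ : Fin d → ℤ) (k : ℕ) : Fin d → ℤ :=
  fun i => if (i : ℕ) = k - 2 then btil θ (k - 1) + 1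
    else if (i : ℕ) = k - 1 then θ i - 1
    else if k ≤ (i : ℕ) then θ i else 0

/-- The vertex `v^{j,k} = (b̃_k e_j, 0, …, 0, θ_{k+1}, …, θ_d)` of `P` (1-indexed). -/
def vP (d : ℕ) (θ : Fin d → ℤ) (j k : ℕ) : Fin d → ℤ :=
  fun i => if (i : ℕ) = j - 1 then btil θ k
    else if k ≤ (i : ℕ) then θ i else 0

/-- The point `b·e_j` (1-indexed `j`). -/
def beP (d : ℕ) (θ : Fin d → ℤ) (j : ℕ) : Fin d → ℤ :=
  fun i => if (i : ℕ) = j - 1 then bsum θ else 0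

/-- The vertex `u^k = (b̃_{k-1}e_{k-1}, θ_k, …, θ_d)` of `Q` (1-indexed, `2 ≤ k ≤ d+1`). -/
def uQ (d : ℕ) (θ : Fin d → ℤ) (k : ℕ) : Fin d → ℤ :=
  fun i => if (i : ℕ) = k - 2 then btil θ (k - 1)
    else if k - 1 ≤ (i : ℕ) then θ i else 0

/-- The vertex `v^{j,k} = ((b̃_{k-1}-1)e_j, 0, …, 0, θ_k + 1, θ_{k+1}, …, θ_d)` of `Q`. -/
def vQ (d : ℕ) (θ : Fin d → ℤ) (j k : ℕ) : Fin d → ℤ :=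
  fun i => if (i : ℕ) = j - 1 then btil θ (k - 1) - 1
    else if (i : ℕ) = k - 1 then θ i + 1
    else if k ≤ (i : ℕ) then θ i else 0

/-- Edge boundary of a vertex set in a graph. -/
def eboundary {V : Type*} (G : SimpleGraph V) (S : Set V) : Set (V × V) :=
  {p | G.Adj p.1 p.2 ∧ p.1 ∈ S ∧ p.2 ∉ S}

section

variable {E : Type*} [AddCommGroup E] [Module ℝ E]

/-- The set of `x` with `l x ≤ M` that lie in `convexHull {w ∈ V | l w = M}` as soon as
`l x = M` is convex and contains `V`. -/
theorem mem_convexHull_sep_of_le (l : E →ₗ[ℝ] ℝ) {V : Set E} {M : ℝ} (hV : ∀ w ∈ V, l w ≤ M)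
    {x : E} (hx : x ∈ convexHull ℝ V) (hxM : M ≤ l x) :
    x ∈ convexHull ℝ {w ∈ V | l w = M} := by
  set F := convexHull ℝ {w ∈ V | l w = M}
  have hconv : Convex ℝ {y | l y ≤ M ∧ (M ≤ l y → y ∈ F)} := by
    refine convex_iff_forall_pos.2 fun y hy z hz a b ha hb hab ↦ ⟨?_, fun hM ↦ ?_⟩
    all_goals have hsum : a * M + b * M = M := by rw [← add_mul, hab, one_mul]
    · rw [map_add, map_smul, map_smul, smul_eq_mul, smul_eq_mul]
      linarith [mul_le_mul_of_nonneg_left hy.1 ha.le, mul_le_mul_of_nonneg_left hz.1 hb.le]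
    · rw [map_add, map_smul, map_smul, smul_eq_mul, smul_eq_mul] at hM
      have hyM : l y = M := by
        by_contra hne
        linarith [mul_lt_mul_of_pos_left (lt_of_le_of_ne hy.1 hne) ha,
          mul_le_mul_of_nonneg_left hz.1 hb.le]
      have hzM : l z = M := by
        by_contra hne
        linarith [mul_lt_mul_of_pos_left (lt_of_le_of_ne hz.1 hne) hb,
          mul_le_mul_of_nonneg_left hy.1 ha.le]
      exact convex_convexHull ℝ _ (hy.2 hyM.ge) (hz.2 hzM.ge) ha.le hb.le hab
  have hVsub : V ⊆ {y | l y ≤ M ∧ (M ≤ l y → y ∈ F)} := fun w hw ↦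
    ⟨hV w hw, fun hM ↦ subset_convexHull ℝ _ ⟨hw, le_antisymm (hV w hw) hM⟩⟩
  exact (convexHull_min hVsub hconv hx).2 hxM

theorem isExposed_convexHull_sep [TopologicalSpace E] (V : Set E) (l : StrongDual ℝ E) {M : ℝ}
    (hV : ∀ w ∈ V, l w ≤ M) : IsExposed ℝ (convexHull ℝ V) (convexHull ℝ {w ∈ V | l w = M}) := by
  rintro ⟨x, hx⟩
  have hle : ∀ y ∈ convexHull ℝ V, l y ≤ M := fun y hy ↦
    convexHull_min hV (convex_halfSpace_le l.isLinear M) hy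
  have heq : ∀ y ∈ convexHull ℝ {w ∈ V | l w = M}, l y = M := fun y hy ↦
    convexHull_min (fun w hw ↦ hw.2) (convex_hyperplane l.isLinear M) hy
  refine ⟨l, Subset.antisymm (fun y hy ↦ ⟨convexHull_mono (sep_subset _ _) hy, fun z hz ↦ ?_⟩) ?_⟩
  · exact (heq y hy).symm ▸ hle z hz
  · rintro y ⟨hy, hmax⟩
    exact mem_convexHull_sep_of_le (l : E →ₗ[ℝ] ℝ) hV hy
      ((heq x hx).symm.le.trans (hmax x (convexHull_mono (sep_subset _ _) hx)))

theorem eq_of_sub_eq_smul_sub_of_mem_extremePoints {A : Set E} {v s u : E} (hv : v ∈ A)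
    (hs : s ∈ A.extremePoints ℝ) (hu : u ∈ A.extremePoints ℝ) (hsv : s ≠ v) (huv : u ≠ v)
    {a : ℝ} (ha : 0 < a) (h : s - v = a • (u - v)) : s = u := by
  have key : ∀ {s u : E} {a : ℝ}, s ∈ A.extremePoints ℝ → u ∈ A → s ≠ v → 0 < a →
      s - v = a • (u - v) → 1 ≤ a := by
    intro s u a hs hu hsv ha h
    by_contra! ha1
    have hseg : s ∈ openSegment ℝ v u := by
      rw [openSegment_eq_image']
      exact ⟨a, ⟨ha, ha1⟩, by simp only [← h]; abel⟩
    exact hsv (hs.2 hv hu hseg).symm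
  have h' : u - v = a⁻¹ • (s - v) := by rw [h, inv_smul_smul₀ ha.ne']
  have ha1 : 1 ≤ a := key hs hu.1 hsv ha h
  have ha1' : 1 ≤ a⁻¹ := key hu hs.1 huv (inv_pos.2 ha) h'
  have : a = 1 := le_antisymm (by simpa using (one_le_inv₀ ha).1 ha1') ha1
  simpa [this] using h

end

section

variable {E : Type*} [AddCommGroup E] [Module ℝ E] [TopologicalSpace E] [T2Space E]
  [IsTopologicalAddGroup E] [ContinuousSMul ℝ E] [LocallyConvexSpace ℝ E]

theorem Set.Finite.convexHull_extremePoints_convexHull {V : Set E} (hV : V.Finite) :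
    convexHull ℝ ((convexHull ℝ V).extremePoints ℝ) = convexHull ℝ V := by
  have hfin : ((convexHull ℝ V).extremePoints ℝ).Finite := hV.subset extremePoints_convexHull_subset
  rw [← (hfin.isCompact_convexHull (𝕜 := ℝ)).isClosed.closure_eq,
    closure_convexHull_extremePoints (hV.isCompact_convexHull (𝕜 := ℝ)) (convex_convexHull ℝ V)]

theorem Set.Finite.exists_strongDual_lt_of_mem_extremePoints {V : Set E} (hV : V.Finite) {v : E}
    (hv : v ∈ (convexHull ℝ V).extremePoints ℝ) :
    ∃ l : StrongDual ℝ E, ∀ w ∈ V, w ≠ v → l w < l v := by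
  have hnot : v ∉ convexHull ℝ (V \ {v}) := fun hmem ↦
    ((convex_convexHull ℝ V).mem_extremePoints_iff_mem_sdiff_convexHull_sdiff.1 hv).2
      (convexHull_mono (sdiff_subset_sdiff_left (subset_convexHull ℝ V)) hmem)
  obtain ⟨l, c, hl, hc⟩ := geometric_hahn_banach_closed_point (convex_convexHull ℝ _)
    (hV.sdiff.isCompact_convexHull (𝕜 := ℝ)).isClosed hnot
  exact ⟨l, fun w hw hwv ↦ (hl w (subset_convexHull ℝ _ ⟨hw, hwv⟩)).trans hc⟩

end

section CentralProjection

variable {E : Type*} [AddCommGroup E] [Module ℝ E] [TopologicalSpace E]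

/-- Central projection from `v` of the point `s` onto the hyperplane `l = l v - 1`,
translated by `-v`. -/
noncomputable def centralProj (l : StrongDual ℝ E) (v s : E) : E :=
  (l v - l s)⁻¹ • (s - v)

variable {l : StrongDual ℝ E} {v s : E}

theorem sub_eq_smul_centralProj (h : l s ≠ l v) : s - v = (l v - l s) • centralProj l v s := by
  rw [centralProj, smul_inv_smul₀ (sub_ne_zero.2 h.symm)]

theorem apply_centralProj (h : l s ≠ l v) : l (centralProj l v s) = -1 := by
  have : l v - l s ≠ 0 := sub_ne_zero.2 h.symm
  rw [centralProj, map_smul, map_sub, smul_eq_mul]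
  field_simp
  ring

theorem centralProj_injOn {A : Set E} (hv : v ∈ A)
    (hl : ∀ w ∈ A.extremePoints ℝ, w ≠ v → l w < l v) :
    InjOn (centralProj l v) (A.extremePoints ℝ \ {v}) := by
  rintro s ⟨hs, hsv⟩ u ⟨hu, huv⟩ h
  have hts := sub_pos.2 (hl s hs hsv)
  have htu := sub_pos.2 (hl u hu huv)
  refine eq_of_sub_eq_smul_sub_of_mem_extremePoints hv hs hu hsv huv
    (div_pos hts htu) ?_
  rw [sub_eq_smul_centralProj (hl s hs hsv).ne, sub_eq_smul_centralProj (hl u hu huv).ne, h,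
    smul_smul, div_mul_cancel₀ _ htu.ne']

theorem apply_sub_apply_eq_mul_centralProj (g : StrongDual ℝ E) (q : E) (h : l s ≠ l v) :
    (g + g q • l) s - (g + g q • l) v = (l v - l s) * (g (centralProj l v s) - g q) := by
  rw [← map_sub, sub_eq_smul_centralProj h, map_smul, smul_eq_mul, add_apply,
    smul_apply, apply_centralProj h, smul_eq_mul]
  ring

end CentralProjection

namespace IsPolytope

variable {n : ℕ} {X : Set (Fin n → ℝ)}

theorem convex (hX : IsPolytope X) : Convex ℝ X := by
  obtain ⟨V, rfl⟩ := hX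
  exact convex_convexHull ℝ _

theorem isCompact (hX : IsPolytope X) : IsCompact X := by
  obtain ⟨V, rfl⟩ := hX
  exact V.finite_toSet.isCompact_convexHull (𝕜 := ℝ)

theorem finite_extremePoints (hX : IsPolytope X) : (X.extremePoints ℝ).Finite := by
  obtain ⟨V, rfl⟩ := hX
  exact V.finite_toSet.subset extremePoints_convexHull_subset

theorem convexHull_extremePoints (hX : IsPolytope X) : convexHull ℝ (X.extremePoints ℝ) = X := by
  obtain ⟨V, rfl⟩ := hX
  exact V.finite_toSet.convexHull_extremePoints_convexHull

theorem exists_extremePoint_isMaxOn (hX : IsPolytope X) (hne : X.Nonempty)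
    (l : StrongDual ℝ (Fin n → ℝ)) : ∃ v ∈ X.extremePoints ℝ, IsMaxOn l X v := by
  obtain ⟨v, hv, hmax⟩ := exists_max_image _ l hX.finite_extremePoints
    (hX.isCompact.extremePoints_nonempty hne)
  refine ⟨v, hv, isMaxOn_iff.2 fun y hy ↦ ?_⟩
  rw [← hX.convexHull_extremePoints] at hy
  exact convexHull_min hmax (convex_halfSpace_le l.isLinear _) hy

end IsPolytope

section ConeHull

variable {n : ℕ} {S : Set (Fin n → ℝ)}

theorem zero_mem_coneHull : (0 : Fin n → ℝ) ∈ coneHull S := Or.inl rfl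

theorem smul_mem_coneHull {c : ℝ} (hc : 0 ≤ c) {z : Fin n → ℝ} (hz : z ∈ convexHull ℝ S) :
    c • z ∈ coneHull S :=
  Or.inr ⟨c, hc, z, hz, rfl⟩

theorem smul_mem_coneHull_of_mem {c : ℝ} (hc : 0 ≤ c) {y : Fin n → ℝ} (hy : y ∈ coneHull S) :
    c • y ∈ coneHull S := by
  rcases hy with rfl | ⟨c', hc', z, hz, rfl⟩
  · rw [smul_zero]
    exact zero_mem_coneHull
  · rw [smul_smul]
    exact smul_mem_coneHull (mul_nonneg hc hc') hz

theorem convex_coneHull : Convex ℝ (coneHull S) := by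
  refine convex_iff_forall_pos.2 fun x hx y hy a b ha hb hab ↦ ?_
  rcases hx with rfl | ⟨c₁, hc₁, z₁, hz₁, rfl⟩
  · simpa using smul_mem_coneHull_of_mem hb.le hy
  rcases hy with rfl | ⟨c₂, hc₂, z₂, hz₂, rfl⟩
  · simpa using smul_mem_coneHull_of_mem ha.le (smul_mem_coneHull hc₁ hz₁)
  have h₁ : 0 ≤ a * c₁ := mul_nonneg ha.le hc₁
  have h₂ : 0 ≤ b * c₂ := mul_nonneg hb.le hc₂
  rw [smul_smul, smul_smul]
  rcases (add_nonneg h₁ h₂).eq_or_lt with hA | hA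
  · obtain ⟨h₁, h₂⟩ := (add_eq_zero_iff_of_nonneg h₁ h₂).1 hA.symm
    rw [h₁, h₂, zero_smul, zero_smul, add_zero]
    exact zero_mem_coneHull
  · have hz : (a * c₁ / (a * c₁ + b * c₂)) • z₁ + (b * c₂ / (a * c₁ + b * c₂)) • z₂ ∈
        convexHull ℝ S :=
      convex_convexHull ℝ S hz₁ hz₂ (by positivity) (by positivity) (by field_simp)
    convert smul_mem_coneHull hA.le hz using 1
    rw [smul_add, smul_smul, smul_smul, mul_div_cancel₀ _ hA.ne', mul_div_cancel₀ _ hA.ne']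

theorem coneHull_subset_of_convexHull_subset {P : Set (Fin n → ℝ)}
    (h : convexHull ℝ P ⊆ coneHull S) : coneHull P ⊆ coneHull S := by
  rintro y (rfl | ⟨c, hc, z, hz, rfl⟩)
  · exact zero_mem_coneHull
  · exact smul_mem_coneHull_of_mem hc (h hz)

end ConeHull

section VertexFigure

variable {n : ℕ} {X : Set (Fin n → ℝ)} {v : Fin n → ℝ} {l : StrongDual ℝ (Fin n → ℝ)}

theorem sub_mem_coneHull_centralProj (hX : IsPolytope X)
    (hl : ∀ w ∈ X.extremePoints ℝ, w ≠ v → l w < l v) {x : Fin n → ℝ} (hx : x ∈ X) :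
    x - v ∈ coneHull (centralProj l v '' (X.extremePoints ℝ \ {v})) := by
  set P := centralProj l v '' (X.extremePoints ℝ \ {v})
  rw [← hX.convexHull_extremePoints] at hx
  have hconv : Convex ℝ {y | y - v ∈ coneHull P} := fun y hy z hz a b ha hb hab ↦ by
    show a • y + b • z - v ∈ coneHull P
    convert convex_coneHull hy hz ha hb hab using 1
    obtain rfl := eq_sub_of_add_eq' hab
    module
  refine convexHull_min (fun w hw ↦ ?_) hconv hx
  by_cases hwv : w = v
  · rw [Set.mem_ofPred_eq, hwv, sub_self]
    exact zero_mem_coneHull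
  · rw [Set.mem_ofPred_eq, sub_eq_smul_centralProj (hl w hw hwv).ne]
    exact smul_mem_coneHull (sub_pos.2 (hl w hw hwv)).le
      (subset_convexHull ℝ _ ⟨w, ⟨hw, hwv⟩, rfl⟩)

theorem adjVert_of_centralProj_mem_extremePoints (hX : IsPolytope X)
    (hv : v ∈ X.extremePoints ℝ) (hl : ∀ w ∈ X.extremePoints ℝ, w ≠ v → l w < l v)
    {u : Fin n → ℝ} (hu : u ∈ X.extremePoints ℝ \ {v})
    (hq : centralProj l v u ∈
      (convexHull ℝ (centralProj l v '' (X.extremePoints ℝ \ {v}))).extremePoints ℝ) :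
    AdjVert X v u := by
  set q := centralProj l v u
  obtain ⟨g, hg⟩ :=
    (hX.finite_extremePoints.sdiff.image _).exists_strongDual_lt_of_mem_extremePoints hq
  set h := g + g q • l
  have hhu : h u = h v := by
    have := apply_sub_apply_eq_mul_centralProj g q (hl u hu.1 hu.2).ne
    rw [sub_self, mul_zero] at this
    linarith
  have hlt : ∀ w ∈ X.extremePoints ℝ, w ≠ v → w ≠ u → h w < h v := by
    intro w hw hwv hwu
    have hgw := hg _ ⟨w, ⟨hw, hwv⟩, rfl⟩
      fun heq ↦ hwu (centralProj_injOn (extremePoints_subset hv) hl ⟨hw, hwv⟩ hu heq)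
    have := apply_sub_apply_eq_mul_centralProj g q (hl w hw hwv).ne
    nlinarith [sub_pos.2 (hl w hw hwv)]
  have hle : ∀ w ∈ X.extremePoints ℝ, h w ≤ h v := by
    intro w hw
    by_cases hwv : w = v
    · rw [hwv]
    by_cases hwu : w = u
    · rw [hwu, hhu]
    exact (hlt w hw hwv hwu).le
  have hface : {w ∈ X.extremePoints ℝ | h w = h v} = {v, u} := by
    ext w
    refine ⟨fun ⟨hw, hwh⟩ ↦ ?_, ?_⟩
    · by_contra hne
      simp only [mem_insert_iff, mem_singleton_iff, not_or] at hne
      exact (hlt w hw hne.1 hne.2).ne hwh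
    · rintro (rfl | rfl)
      exacts [⟨hv, rfl⟩, ⟨hu.1, hhu⟩]
  have hexp := isExposed_convexHull_sep _ h hle
  rw [hface, convexHull_pair, hX.convexHull_extremePoints] at hexp
  exact ⟨Ne.symm hu.2, hv, hu.1, hexp⟩

theorem sub_mem_coneHull_adjVert (hX : IsPolytope X) (hv : v ∈ X.extremePoints ℝ)
    {x : Fin n → ℝ} (hx : x ∈ X) :
    x - v ∈ coneHull {z | ∃ u, AdjVert X v u ∧ z = u - v} := by
  have hv' : v ∈ (convexHull ℝ (X.extremePoints ℝ)).extremePoints ℝ := by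
    rwa [hX.convexHull_extremePoints]
  obtain ⟨l, hl⟩ := hX.finite_extremePoints.exists_strongDual_lt_of_mem_extremePoints hv'
  have hfig : convexHull ℝ (centralProj l v '' (X.extremePoints ℝ \ {v})) ⊆
      coneHull {z | ∃ u, AdjVert X v u ∧ z = u - v} := by
    rw [← (hX.finite_extremePoints.sdiff.image _).convexHull_extremePoints_convexHull]
    refine convexHull_min (fun q hq ↦ ?_) convex_coneHull
    obtain ⟨u, hu, rfl⟩ := extremePoints_convexHull_subset hq
    exact smul_mem_coneHull (inv_nonneg.2 (sub_pos.2 (hl u hu.1 hu.2)).le)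
      (subset_convexHull ℝ _ ⟨u, adjVert_of_centralProj_mem_extremePoints hX hv hl hu hq, rfl⟩)
  exact coneHull_subset_of_convexHull_subset hfig (sub_mem_coneHull_centralProj hX hl hx)

end VertexFigure

theorem subset_tangentCone {n : ℕ} {X : Set (Fin n → ℝ)} (hX : IsPolytope X) {v : Fin n → ℝ}
    (hv : v ∈ X.extremePoints ℝ) : X ⊆ tangentCone X v := fun x hx ↦
  ⟨x - v, sub_mem_coneHull_adjVert hX hv hx, (add_sub_cancel v x).symm⟩

theorem tangentCone_subset_halfSpace {n : ℕ} {X : Set (Fin n → ℝ)} {v : Fin n → ℝ}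
    (l : StrongDual ℝ (Fin n → ℝ)) (hmax : IsMaxOn l X v) :
    tangentCone X v ⊆ {p | l p ≤ l v} := by
  rintro _ ⟨y, hy, rfl⟩
  suffices l y ≤ 0 by simpa using this
  rcases hy with rfl | ⟨c, hc, z, hz, rfl⟩
  · simp
  have hz : l z ≤ 0 := by
    refine convexHull_min (fun d hd ↦ ?_) (convex_halfSpace_le l.isLinear 0) hz
    obtain ⟨u, hu, rfl⟩ := hd
    simpa using isMaxOn_iff.1 hmax u (extremePoints_subset hu.2.2.1)
  simpa using mul_nonpos_of_nonneg_of_nonpos hc hz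

/-- Every polytope equals the intersection of its tangent cones at its
vertices. -/
theorem polytope_eq_iInter_tangentCones {n : ℕ} (X : Set (Fin n → ℝ))
    (hX : IsPolytope X) (hne : X.Nonempty) :
    X = ⋂ v ∈ X.extremePoints ℝ, tangentCone X v := by
  refine Subset.antisymm (fun x hx ↦ mem_iInter₂.2 fun v hv ↦ subset_tangentCone hX hv hx)
    fun q hq ↦ ?_
  by_contra hqX
  obtain ⟨l, c, hl, hc⟩ := geometric_hahn_banach_closed_point hX.convex hX.isCompact.isClosed hqX
  obtain ⟨v, hv, hmax⟩ := hX.exists_extremePoint_isMaxOn hne l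
  have hqv : l q ≤ l v := tangentCone_subset_halfSpace l hmax (mem_iInter₂.1 hq v hv)
  linarith [hl v (extremePoints_subset hv)]
end

section
/- The vertices of the grlex polytope P are exactly: the origin 0, the point θ, the point w = (b-1)e_d, the points u^k = ((b̃_{k-1}+1)e_{k-1}, θ_k - 1, θ_{k+1}, ..., θ_d) for 3 ≤ k ≤ d, and the points v^{j,k} = (b̃_k e_j, 0, ..., 0, θ_{k+1}, ..., θ_d) for 1 ≤ j < k ≤ d. -/
open Set Finset

/-
The grlex polytope is the convex hull of the lattice points `S = {x ≥ 0 | x ≼ θ}`, so its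
vertices lie in `S`. Each listed point is the unique lexicographic maximiser over `S` of a short
sequence of linear functionals (total degree, then trailing coordinates, then one more
functional), and such a maximiser is extreme because the points lexicographically below it form
a convex set. Conversely, a point `x ∈ S` off the list is the midpoint of two points `x ± δ ∈ S`,
`δ` a unit vector or a difference of two. If the degree `|x| = ∑ xᵢ` is below `b`, a unit can
be moved into or out of a coordinate unless `x ∈ {0, w}`. If `|x| = b` and `x ≠ θ`, let `T` be
the last coordinate with `x_T < θ_T`; then exactly one coordinate `p < T` is positive, and a unit
can be moved back and forth between `p` and `T` unless `x = v^{p+1,T+1}` or `x = u^{T+1}`.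
-/

lemma Finset.eq_zero_of_sum_subset_eq {ι M : Type*} [AddCommMonoid M] [PartialOrder M]
    [IsOrderedCancelAddMonoid M] {s t : Finset ι} {f : ι → M} (hts : t ⊆ s)
    (hf : ∀ i ∈ s, 0 ≤ f i) (h : ∑ i ∈ t, f i = ∑ i ∈ s, f i) {i : ι} (hi : i ∈ s) (hit : i ∉ t) :
    f i = 0 := by
  by_contra hne
  exact (Finset.sum_lt_sum_of_subset hts hi hit ((hf i hi).lt_of_ne' hne) fun j hj _ =>
    hf j hj).ne h

lemma eq_pi_single_of_sum_eq {ι M : Type*} [Fintype ι] [DecidableEq ι] [AddCommMonoid M]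
    [PartialOrder M] [IsOrderedCancelAddMonoid M] {f : ι → M} (hf : ∀ i, 0 ≤ f i) {p : ι}
    (h : ∑ i, f i = f p) : f = Pi.single p (f p) := by
  funext i
  rcases eq_or_ne i p with rfl | hip
  · simp
  rw [Pi.single_eq_of_ne hip]
  exact Finset.eq_zero_of_sum_subset_eq (Finset.subset_univ {p}) (fun i _ => hf i)
    (by rw [Finset.sum_singleton, h]) (Finset.mem_univ i) (by simpa using hip)

section LexBelow

variable {E ι : Type*} [AddCommGroup E] [Module ℝ E] [LinearOrder ι]

def lexBelow (l : ι → E →ₗ[ℝ] ℝ) (v : E) : Set E :=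
  {y | ∃ i, l i y < l i v ∧ ∀ j, i < j → l j y = l j v}

variable {l : ι → E →ₗ[ℝ] ℝ} {v : E}

lemma notMem_lexBelow_self : v ∉ lexBelow l v := fun ⟨_, h, _⟩ => h.false

lemma add_smul_mem_lexBelow {y z : E} {a b : ℝ} (hy : y ∈ lexBelow l v)
    (hz : z ∈ insert v (lexBelow l v)) (ha : 0 < a) (hb : 0 < b) (hab : a + b = 1) :
    a • y + b • z ∈ lexBelow l v := by
  obtain ⟨i, hi, hy⟩ := hy
  have hv : ∀ j, l j v = a * l j v + b * l j v := fun j => by rw [← add_mul, hab, one_mul]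
  simp only [lexBelow, Set.mem_ofPred_eq, map_add, map_smul, smul_eq_mul]
  rcases hz with rfl | ⟨i', hi', hz⟩
  · refine ⟨i, ?_, fun j hj => ?_⟩
    · nlinarith [hv i]
    · rw [hy j hj, ← hv]
  · refine ⟨max i i', ?_, fun j hj => ?_⟩
    · rcases le_total i i' with h | h
      · rw [max_eq_right h]
        rcases h.lt_or_eq with h | rfl
        · nlinarith [hy i' h, hv i']
        · nlinarith [hv i]
      · rw [max_eq_left h]
        rcases h.lt_or_eq with h | rfl
        · nlinarith [hz i h, hv i]
        · nlinarith [hv i']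
    · rw [hy j (lt_of_le_of_lt (le_max_left _ _) hj), hz j (lt_of_le_of_lt (le_max_right _ _) hj),
        ← hv]

lemma convex_lexBelow : Convex ℝ (lexBelow l v) :=
  convex_iff_forall_pos.2 fun _ hy _ hz _ _ ha hb hab =>
    add_smul_mem_lexBelow hy (Set.mem_insert_of_mem _ hz) ha hb hab

lemma convex_insert_lexBelow : Convex ℝ (insert v (lexBelow l v)) := by
  refine convex_iff_forall_pos.2 fun y hy z hz a b ha hb hab => ?_
  rcases hy with rfl | hy
  · rcases hz with rfl | hz
    · rw [← add_smul, hab, one_smul]; exact Set.mem_insert _ _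
    · rw [add_comm]
      exact Set.mem_insert_of_mem _ (add_smul_mem_lexBelow hz (Set.mem_insert _ _) hb ha
        (by rw [add_comm, hab]))
  · exact Set.mem_insert_of_mem _ (add_smul_mem_lexBelow hy hz ha hb hab)

theorem mem_extremePoints_convexHull_of_sdiff_subset_lexBelow {S : Set E} (hv : v ∈ S)
    (hS : S \ {v} ⊆ lexBelow l v) : v ∈ (convexHull ℝ S).extremePoints ℝ := by
  have hsub : convexHull ℝ S ⊆ insert v (lexBelow l v) := by
    refine convexHull_min (fun y hy => ?_) convex_insert_lexBelow
    by_cases hyv : y = v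
    · exact hyv ▸ Set.mem_insert _ _
    · exact Set.mem_insert_of_mem _ (hS ⟨hy, hyv⟩)
  refine inter_extremePoints_subset_extremePoints_of_subset hsub
    ⟨subset_convexHull ℝ S hv, ?_⟩
  rw [convex_insert_lexBelow.mem_extremePoints_iff_convex_sdiff,
    Set.insert_sdiff_self_of_notMem notMem_lexBelow_self]
  exact ⟨Set.mem_insert _ _, convex_lexBelow⟩

lemma mem_lexBelow_unit {f : E →ₗ[ℝ] ℝ} {y : E} (h : f y < f v) :
    y ∈ lexBelow (fun _ : Unit => f) v :=
  ⟨(), h, fun j hj => absurd hj (by simp)⟩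

end LexBelow

@[simp] lemma toR_apply {d : ℕ} (x : Fin d → ℤ) (i : Fin d) : toR x i = x i := rfl

@[simp] lemma toR_zero {d : ℕ} : toR (0 : Fin d → ℤ) = 0 := funext fun _ => Int.cast_zero

lemma toR_injective {d : ℕ} : Function.Injective (toR (d := d)) :=
  fun _ _ h => Int.cast_injective.comp_left h

section GrlexLower

variable {d : ℕ} {θ : Fin d → ℤ}

def grlexLower (θ : Fin d → ℤ) : Set (Fin d → ℤ) := {x | (∀ i, 0 ≤ x i) ∧ grlexLe x θ}

lemma grlexP_eq_convexHull_image : grlexP d θ = convexHull ℝ (toR '' grlexLower θ) := by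
  simp only [grlexP, grlexLower, Set.image, Set.mem_ofPred_eq, eq_comm, and_assoc]

lemma self_mem_grlexLower (hθ : ∀ i, 0 ≤ θ i) : θ ∈ grlexLower θ :=
  ⟨hθ, Or.inr ⟨rfl, Or.inl rfl⟩⟩

lemma sum_le_bsum_of_mem {x : Fin d → ℤ} (hx : x ∈ grlexLower θ) : ∑ i, x i ≤ bsum θ :=
  hx.2.elim le_of_lt fun h => h.1.le

lemma mem_grlexLower_of_sum_lt {y : Fin d → ℤ} (h0 : ∀ i, 0 ≤ y i) (hy : ∑ i, y i < bsum θ) :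
    y ∈ grlexLower θ :=
  ⟨h0, Or.inl hy⟩

lemma mem_grlexLower_of_pivot {y : Fin d → ℤ} {T : Fin d} (h0 : ∀ i, 0 ≤ y i)
    (hy : ∑ i, y i = bsum θ) (hT : y T < θ T) (habove : ∀ i, T < i → y i = θ i) :
    y ∈ grlexLower θ :=
  ⟨h0, Or.inr ⟨hy, Or.inr ⟨T, hT, habove⟩⟩⟩

lemma exists_pivot_of_mem {x : Fin d → ℤ} (hx : x ∈ grlexLower θ) (hsum : ∑ i, x i = bsum θ)
    (hne : x ≠ θ) : ∃ T, x T < θ T ∧ ∀ i, T < i → x i = θ i := by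
  rcases hx.2 with h | ⟨-, h | h⟩
  · exact absurd hsum h.ne
  · exact absurd h hne
  · exact h

lemma le_of_mem_of_eq_above {x : Fin d → ℤ} (hx : x ∈ grlexLower θ) (hsum : ∑ i, x i = bsum θ)
    {m : Fin d} (habove : ∀ i, m < i → x i = θ i) : x m ≤ θ m := by
  rcases eq_or_ne x θ with rfl | hne
  · exact le_rfl
  obtain ⟨T, hT, hTabove⟩ := exists_pivot_of_mem hx hsum hne
  rcases lt_trichotomy m T with h | rfl | h
  · exact absurd (habove T h) hT.ne
  · exact hT.le
  · exact (hTabove m h).le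

end GrlexLower

section PartialSums

variable {d : ℕ}

lemma btil_succ (x : Fin d → ℤ) (T : Fin d) : btil x (T + 1) = btil x T + x T := by
  have : Finset.univ.filter (fun i : Fin d => (i : ℕ) < T + 1) =
      insert T (Finset.univ.filter fun i : Fin d => (i : ℕ) < T) := by
    ext i
    simp only [Finset.mem_filter, Finset.mem_univ, true_and, Finset.mem_insert, Fin.ext_iff]
    omega
  rw [btil, this, Finset.sum_insert (by simp), add_comm, btil]

lemma btil_eq_btil_sub_one_add {x : Fin d → ℤ} {k : ℕ} {K : Fin d} (hk : 1 ≤ k)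
    (hK : (K : ℕ) = k - 1) : btil x k = btil x (k - 1) + x K := by
  have := btil_succ x K
  rwa [hK, Nat.sub_add_cancel hk] at this

lemma btil_sub_btil {x y : Fin d → ℤ} {k : ℕ} (h : ∀ i : Fin d, k ≤ (i : ℕ) → x i = y i) :
    btil x k - btil y k = ∑ i, x i - ∑ i, y i := by
  have htail : ∑ i ∈ Finset.univ.filter (fun i : Fin d => ¬ (i : ℕ) < k), x i =
      ∑ i ∈ Finset.univ.filter (fun i : Fin d => ¬ (i : ℕ) < k), y i :=
    Finset.sum_congr rfl fun i hi => h i (not_lt.1 (Finset.mem_filter.1 hi).2)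
  rw [btil, btil,
    ← Finset.sum_filter_add_sum_filter_not Finset.univ (fun i : Fin d => (i : ℕ) < k) x,
    ← Finset.sum_filter_add_sum_filter_not Finset.univ (fun i : Fin d => (i : ℕ) < k) y, htail]
  ring

lemma sum_eq_bsum_iff_btil_eq {x θ : Fin d → ℤ} {k : ℕ} (h : ∀ i : Fin d, k ≤ (i : ℕ) → x i = θ i) :
    ∑ i, x i = bsum θ ↔ btil x k = btil θ k := by
  have := btil_sub_btil h
  rw [bsum]
  constructor <;> intro <;> linarith

lemma bsum_eq_btil (θ : Fin d → ℤ) : bsum θ = btil θ d := by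
  simp [bsum, btil]

lemma mem_filter_lt {k : ℕ} {i : Fin d} :
    i ∈ Finset.univ.filter (fun i : Fin d => (i : ℕ) < k) ↔ (i : ℕ) < k := by
  simp

lemma eq_of_sum_eq_btil {x y : Fin d → ℤ} {k : ℕ} {t : Finset (Fin d)} (hx : ∀ i, 0 ≤ x i)
    (ht : ∀ i ∈ t, (i : ℕ) < k) (hxt : ∑ i ∈ t, x i = btil x k) (hyt : ∀ i ∈ t, x i = y i)
    (hy : ∀ i : Fin d, (i : ℕ) < k → i ∉ t → y i = 0)
    (htail : ∀ i : Fin d, k ≤ (i : ℕ) → x i = y i) : x = y := by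
  funext i
  by_cases hik : k ≤ (i : ℕ)
  · exact htail i hik
  by_cases hit : i ∈ t
  · exact hyt i hit
  rw [hy i (by omega) hit]
  exact Finset.eq_zero_of_sum_subset_eq (fun j hj => mem_filter_lt.2 (ht j hj)) (fun j _ => hx j)
    hxt (mem_filter_lt.2 (by omega)) hit

lemma le_btil {θ : Fin d → ℤ} (hθ : ∀ i, 1 ≤ θ i) {m : ℕ} (hm : m ≤ d) : (m : ℤ) ≤ btil θ m := by
  induction m with
  | zero => simp [btil]
  | succ m ih =>
    have := btil_succ θ ⟨m, hm⟩
    have := hθ ⟨m, hm⟩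
    push_cast at *
    linarith [ih (by omega)]

end PartialSums

section Extreme

variable {d : ℕ} {θ : Fin d → ℤ}

lemma toR_mem_extremePoints_of_lexBelow {ι : Type*} [LinearOrder ι]
    {l : ι → (Fin d → ℝ) →ₗ[ℝ] ℝ} {v : Fin d → ℤ} (hv : v ∈ grlexLower θ)
    (h : ∀ x ∈ grlexLower θ, x ≠ v → toR x ∈ lexBelow l (toR v)) :
    toR v ∈ (grlexP d θ).extremePoints ℝ := by
  rw [grlexP_eq_convexHull_image]
  refine mem_extremePoints_convexHull_of_sdiff_subset_lexBelow (l := l) ⟨v, hv, rfl⟩ ?_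
  rintro _ ⟨⟨x, hx, rfl⟩, hxv⟩
  exact h x hx fun hxv' => hxv (hxv' ▸ rfl)

lemma eq_zero_of_add_mem_of_sub_mem {x δ : Fin d → ℤ} (hext : toR x ∈ (grlexP d θ).extremePoints ℝ)
    (hadd : x + δ ∈ grlexLower θ) (hsub : x - δ ∈ grlexLower θ) : δ = 0 := by
  rw [grlexP_eq_convexHull_image] at hext
  have hseg : toR x ∈ openSegment ℝ (toR (x + δ)) (toR (x - δ)) := by
    refine ⟨1 / 2, 1 / 2, by norm_num, by norm_num, by norm_num, funext fun i => ?_⟩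
    simp only [toR, Pi.add_apply, Pi.sub_apply, Pi.smul_apply, smul_eq_mul, Int.cast_add,
      Int.cast_sub]
    ring
  have := ((mem_extremePoints.1 hext).2 _ (subset_convexHull ℝ _ ⟨_, hadd, rfl⟩) _
    (subset_convexHull ℝ _ ⟨_, hsub, rfl⟩) hseg).1
  simpa using toR_injective this

end Extreme

section Functionals

variable {d : ℕ} {θ : Fin d → ℤ}

/-- Priorities, most significant first: the total degree, the coordinates `i ≥ k` from the last
one down, then `g`. -/
def grlexFunctionals (k : ℕ) (g : (Fin d → ℝ) →ₗ[ℝ] ℝ) :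
    WithTop (WithBot (Fin d)) → (Fin d → ℝ) →ₗ[ℝ] ℝ
  | ⊤ => ∑ i, LinearMap.proj i
  | (⊥ : WithBot (Fin d)) => g
  | ((i : Fin d) : WithBot (Fin d)) => if k ≤ (i : ℕ) then LinearMap.proj i else 0

variable {k : ℕ} {g : (Fin d → ℝ) →ₗ[ℝ] ℝ}

@[simp] lemma grlexFunctionals_top (y : Fin d → ℝ) :
    grlexFunctionals k g ⊤ y = ∑ i, y i := by
  simp [grlexFunctionals]

@[simp] lemma grlexFunctionals_bot (y : Fin d → ℝ) :
    grlexFunctionals k g ((⊥ : WithBot (Fin d)) : WithTop _) y = g y := rfl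

@[simp] lemma grlexFunctionals_coe (i : Fin d) (y : Fin d → ℝ) :
    grlexFunctionals k g ((i : WithBot (Fin d)) : WithTop _) y =
      if k ≤ (i : ℕ) then y i else 0 := by
  simp only [grlexFunctionals]
  split_ifs <;> rfl

lemma grlexFunctionals_eq_of_lt {y z : Fin d → ℝ} {p : WithBot (Fin d)}
    (hsum : ∑ i, y i = ∑ i, z i) (hcoord : ∀ i : Fin d, p < i → k ≤ (i : ℕ) → y i = z i)
    (j : WithTop (WithBot (Fin d))) (hj : (p : WithTop _) < j) :
    grlexFunctionals k g j y = grlexFunctionals k g j z := by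
  induction j using WithTop.recTopCoe with
  | top => simpa using hsum
  | coe j =>
  induction j using WithBot.recBotCoe with
  | bot => exact absurd (WithTop.coe_lt_coe.1 hj) not_lt_bot
  | coe i =>
    simp only [grlexFunctionals_coe]
    split_ifs with hi
    · exact hcoord i (WithTop.coe_lt_coe.1 hj) hi
    · rfl

lemma toR_mem_lexBelow_grlexFunctionals {x v : Fin d → ℤ} (hx : x ∈ grlexLower θ)
    (hv : ∑ i, v i = bsum θ) (hvθ : ∀ i : Fin d, k ≤ (i : ℕ) → v i = θ i)
    (hg : ∑ i, x i = bsum θ → (∀ i : Fin d, k ≤ (i : ℕ) → x i = θ i) → g (toR x) < g (toR v)) :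
    toR x ∈ lexBelow (grlexFunctionals k g) (toR v) := by
  have hcoe : ∀ y : Fin d → ℤ, ∑ i, toR y i = ((∑ i, y i : ℤ) : ℝ) := fun y => by simp
  rcases (sum_le_bsum_of_mem hx).lt_or_eq with hlt | heq
  · refine ⟨⊤, ?_, fun j hj => (not_top_lt hj).elim⟩
    rw [grlexFunctionals_top, grlexFunctionals_top, hcoe, hcoe, hv]
    exact_mod_cast hlt
  have hsum : ∑ i, toR x i = ∑ i, toR v i := by rw [hcoe, hcoe, heq, hv]
  by_cases htail : ∀ i : Fin d, k ≤ (i : ℕ) → x i = θ i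
  · refine ⟨((⊥ : WithBot (Fin d)) : WithTop _), hg heq htail,
      grlexFunctionals_eq_of_lt hsum fun i _ hi => ?_⟩
    rw [toR_apply, toR_apply, htail i hi, hvθ i hi]
  push Not at htail
  obtain ⟨i₀, hki₀, hne⟩ := htail
  obtain ⟨T, hT, habove⟩ := exists_pivot_of_mem hx heq fun h => hne (h ▸ rfl)
  have hkT : k ≤ (T : ℕ) := by
    by_contra h
    exact hne (habove i₀ (Fin.lt_def.2 (by omega)))
  refine ⟨((T : WithBot (Fin d)) : WithTop _), ?_,
    grlexFunctionals_eq_of_lt hsum fun i hi hki => ?_⟩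
  · simp only [grlexFunctionals_coe, if_pos hkT, toR_apply, hvθ T hkT]
    exact_mod_cast hT
  · rw [toR_apply, toR_apply, habove i (WithBot.coe_lt_coe.1 hi), hvθ i hki]

end Functionals

section Vertices

variable {d : ℕ} {θ : Fin d → ℤ}

lemma zero_mem_extremePoints (hθ : ∀ i, 1 ≤ θ i) (hd : 0 < d) :
    (0 : Fin d → ℝ) ∈ (grlexP d θ).extremePoints ℝ := by
  have hb : (d : ℤ) ≤ bsum θ := bsum_eq_btil θ ▸ le_btil hθ le_rfl
  have h0 : (0 : Fin d → ℤ) ∈ grlexLower θ :=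
    mem_grlexLower_of_sum_lt (fun _ => le_rfl) (by simp; omega)
  have := toR_mem_extremePoints_of_lexBelow (l := fun _ : Unit => -∑ i, LinearMap.proj i) h0
    fun x hx hx0 => mem_lexBelow_unit ?_
  · simpa using this
  obtain ⟨i, hi⟩ := Function.ne_iff.1 hx0
  have hpos : 0 < ∑ i, x i :=
    Finset.sum_pos' (fun i _ => hx.1 i) ⟨i, Finset.mem_univ i, lt_of_le_of_ne (hx.1 i) (Ne.symm hi)⟩
  simpa using (Int.cast_pos (R := ℝ)).2 hpos

lemma self_mem_extremePoints (hθ : ∀ i, 1 ≤ θ i) :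
    toR θ ∈ (grlexP d θ).extremePoints ℝ :=
  toR_mem_extremePoints_of_lexBelow (l := grlexFunctionals 0 0)
    (self_mem_grlexLower fun i => zero_le_one.trans (hθ i)) fun _ hx hxθ =>
      toR_mem_lexBelow_grlexFunctionals hx rfl (fun _ _ => rfl) fun _ htail =>
        absurd (funext fun i => htail i (Nat.zero_le _)) hxθ

end Vertices

section VertexW

variable {d : ℕ} {θ : Fin d → ℤ} {L : Fin d}

lemma wP_eq_single (hL : (L : ℕ) = d - 1) : wP d θ = Pi.single L (bsum θ - 1) := by
  funext i
  simp only [wP, Pi.single_apply, Fin.ext_iff, hL]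

lemma single_nonneg {p : Fin d} {c : ℤ} (hc : 0 ≤ c) : ∀ i, 0 ≤ (Pi.single p c : Fin d → ℤ) i :=
  fun i => (Pi.single_nonneg.2 hc : (0 : Fin d → ℤ) ≤ _) i

lemma single_mem_grlexLower {p : Fin d} {c : ℤ} (hc : 0 ≤ c) (hcb : c < bsum θ) :
    Pi.single p c ∈ grlexLower θ :=
  mem_grlexLower_of_sum_lt (single_nonneg hc) (by rwa [Fintype.sum_pi_single'])

lemma le_bsum_sub_two (hθ : ∀ i, 1 ≤ θ i) (hd : 3 ≤ d) (hL : (L : ℕ) = d - 1) :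
    θ L ≤ bsum θ - 2 := by
  have hsucc := btil_succ θ L
  have hle := le_btil hθ (m := d - 1) (by omega)
  rw [hL, Nat.sub_add_cancel (by omega), ← bsum_eq_btil θ] at hsucc
  push_cast [show 1 ≤ d by omega] at hle
  omega

lemma wP_mem_extremePoints (hθ : ∀ i, 1 ≤ θ i) (hd : 3 ≤ d) :
    toR (wP d θ) ∈ (grlexP d θ).extremePoints ℝ := by
  obtain ⟨L, hL⟩ : ∃ L : Fin d, (L : ℕ) = d - 1 := ⟨⟨d - 1, by omega⟩, rfl⟩
  have hb : (d : ℤ) ≤ bsum θ := bsum_eq_btil θ ▸ le_btil hθ le_rfl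
  rw [wP_eq_single hL]
  refine toR_mem_extremePoints_of_lexBelow (l := fun _ : Unit => LinearMap.proj L)
    (single_mem_grlexLower (by omega) (by omega)) fun x hx hxw => mem_lexBelow_unit ?_
  suffices x L < bsum θ - 1 by simpa using (Int.cast_lt (R := ℝ)).2 this
  rcases (sum_le_bsum_of_mem hx).lt_or_eq with hlt | heq
  · have hxL := Finset.single_le_sum (fun i _ => hx.1 i) (Finset.mem_univ L)
    refine lt_of_le_of_ne (by omega) fun hxL' => hxw ?_
    rw [eq_pi_single_of_sum_eq hx.1 (by omega : ∑ i, x i = x L), hxL']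
  · have := le_of_mem_of_eq_above hx heq (m := L) fun i h => by rw [Fin.lt_def] at h; omega
    have := le_bsum_sub_two hθ hd hL
    omega

end VertexW

section VertexV

variable {d : ℕ} {θ : Fin d → ℤ} {j k : ℕ}

lemma vP_of_le {i : Fin d} (hjk : j < k) (hi : k ≤ (i : ℕ)) : vP d θ j k i = θ i := by
  simp only [vP]; rw [if_neg (by omega), if_pos hi]

lemma vP_of_lt {i : Fin d} (hi : (i : ℕ) < k) (hij : (i : ℕ) ≠ j - 1) : vP d θ j k i = 0 := by
  simp only [vP]; rw [if_neg hij, if_neg (by omega)]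

lemma sum_vP (hj : 1 ≤ j) (hjk : j < k) (hk : k ≤ d) : ∑ i, vP d θ j k i = bsum θ := by
  refine (sum_eq_bsum_iff_btil_eq fun i => vP_of_le hjk).2 ?_
  rw [btil, Finset.sum_eq_single_of_mem ⟨j - 1, by omega⟩ (mem_filter_lt.2 (by simp; omega))
    fun i hi hiJ => vP_of_lt (mem_filter_lt.1 hi) fun h => hiJ (Fin.ext h)]
  exact if_pos rfl

lemma vP_mem_grlexLower (hθ : ∀ i, 1 ≤ θ i) (hj : 1 ≤ j) (hjk : j < k) (hk : k ≤ d) :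
    vP d θ j k ∈ grlexLower θ := by
  obtain ⟨K, hK⟩ : ∃ K : Fin d, (K : ℕ) = k - 1 := ⟨⟨k - 1, by omega⟩, rfl⟩
  refine mem_grlexLower_of_pivot (T := K) (fun i => ?_) (sum_vP hj hjk hk) ?_
    fun i hi => vP_of_le hjk (by rw [Fin.lt_def] at hi; omega)
  · simp only [vP]
    have := le_btil hθ hk
    split_ifs <;> linarith [hθ i]
  · rw [vP_of_lt (by omega) (by omega)]
    exact hθ K

lemma vP_mem_extremePoints (hθ : ∀ i, 1 ≤ θ i) (hj : 1 ≤ j) (hjk : j < k) (hk : k ≤ d) :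
    toR (vP d θ j k) ∈ (grlexP d θ).extremePoints ℝ := by
  obtain ⟨J, hJ⟩ : ∃ J : Fin d, (J : ℕ) = j - 1 := ⟨⟨j - 1, by omega⟩, rfl⟩
  have hJk : (J : ℕ) < k := by omega
  have hvJ : vP d θ j k J = btil θ k := if_pos hJ
  refine toR_mem_extremePoints_of_lexBelow (l := grlexFunctionals k (LinearMap.proj J))
    (vP_mem_grlexLower hθ hj hjk hk) fun x hx hxv => toR_mem_lexBelow_grlexFunctionals hx
    (sum_vP hj hjk hk) (fun i => vP_of_le hjk) fun hxsum hxtail => ?_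
  suffices x J < btil θ k by simpa [hvJ] using (Int.cast_lt (R := ℝ)).2 this
  have hbx : btil x k = btil θ k := (sum_eq_bsum_iff_btil_eq hxtail).1 hxsum
  refine lt_of_le_of_ne (hbx ▸ Finset.single_le_sum (fun i _ => hx.1 i) (mem_filter_lt.2 hJk))
    fun hxJ => hxv (eq_of_sum_eq_btil (t := {J}) hx.1 (by simpa using hJk)
      (by rw [Finset.sum_singleton, hxJ, hbx]) (by simp [hxJ, hvJ])
      (fun i hi hiJ => vP_of_lt hi fun h => by simp [Fin.ext (h.trans hJ.symm)] at hiJ)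
      fun i hi => by rw [hxtail i hi, vP_of_le hjk hi])

end VertexV

section VertexU

variable {d : ℕ} {θ x : Fin d → ℤ} {k : ℕ} {K₁ K₂ : Fin d}

lemma uP_of_le {i : Fin d} (hk : 1 ≤ k) (hi : k ≤ (i : ℕ)) : uP d θ k i = θ i := by
  simp only [uP]; rw [if_neg (by omega), if_neg (by omega), if_pos hi]

lemma uP_of_lt {i : Fin d} (hi : (i : ℕ) < k) (h₂ : i ≠ K₂) (h₁ : i ≠ K₁)
    (hK₂ : (K₂ : ℕ) = k - 2) (hK₁ : (K₁ : ℕ) = k - 1) : uP d θ k i = 0 := by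
  simp only [uP]
  rw [if_neg fun h => h₂ (Fin.ext (h.trans hK₂.symm)),
    if_neg fun h => h₁ (Fin.ext (h.trans hK₁.symm)), if_neg (by omega)]

lemma uP_of_eq_sub_two (hK₂ : (K₂ : ℕ) = k - 2) : uP d θ k K₂ = btil θ (k - 1) + 1 :=
  if_pos hK₂

lemma uP_of_eq_sub_one (hk : 2 ≤ k) (hK₁ : (K₁ : ℕ) = k - 1) : uP d θ k K₁ = θ K₁ - 1 := by
  simp only [uP]; rw [if_neg (by omega), if_pos hK₁]

lemma sum_uP (hk : 2 ≤ k) (hK₂ : (K₂ : ℕ) = k - 2) (hK₁ : (K₁ : ℕ) = k - 1) :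
    ∑ i, uP d θ k i = bsum θ := by
  have hne : K₂ ≠ K₁ := fun h => by rw [h] at hK₂; omega
  refine (sum_eq_bsum_iff_btil_eq (θ := θ) fun i => uP_of_le (by omega)).2 ?_
  rw [btil, Finset.sum_eq_add_of_mem K₂ K₁ (mem_filter_lt.2 (by omega))
    (mem_filter_lt.2 (by omega)) hne fun i hi hne =>
      uP_of_lt (mem_filter_lt.1 hi) hne.1 hne.2 hK₂ hK₁,
    uP_of_eq_sub_two hK₂, uP_of_eq_sub_one (by omega) hK₁,
    btil_eq_btil_sub_one_add (by omega) hK₁]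
  ring

lemma uP_mem_grlexLower (hθ : ∀ i, 1 ≤ θ i) (hk : 2 ≤ k) (hK₂ : (K₂ : ℕ) = k - 2)
    (hK₁ : (K₁ : ℕ) = k - 1) : uP d θ k ∈ grlexLower θ := by
  refine mem_grlexLower_of_pivot (T := K₁) (fun i => ?_) (sum_uP hk hK₂ hK₁)
    (by rw [uP_of_eq_sub_one hk hK₁]; omega)
    fun i hi => uP_of_le (by omega) (by rw [Fin.lt_def] at hi; omega)
  have := le_btil hθ (m := k - 1) (by omega)
  simp only [uP]
  split_ifs <;> linarith [hθ i]

/-- `2 x_{k-2} + 3 x_{k-1} = 2 (x_{k-2} + x_{k-1}) + x_{k-1}`: the pair sum is at most `b̃_k`, and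
`x_{k-1} = θ_{k-1}` would force `x_{k-2} ≤ θ_{k-2} < b̃_{k-1}` by the lexicographic condition. -/
lemma two_mul_add_three_mul_lt_uP (hθ : ∀ i, 1 ≤ θ i) (hk : 3 ≤ k) (hK₂ : (K₂ : ℕ) = k - 2)
    (hK₁ : (K₁ : ℕ) = k - 1) (hx : x ∈ grlexLower θ) (hxsum : ∑ i, x i = bsum θ)
    (hxtail : ∀ i : Fin d, k ≤ (i : ℕ) → x i = θ i) (hxu : x ≠ uP d θ k) :
    2 * x K₂ + 3 * x K₁ < 2 * uP d θ k K₂ + 3 * uP d θ k K₁ := by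
  have hne : K₂ ≠ K₁ := fun h => by rw [h] at hK₂; omega
  have hpair : {K₂, K₁} ⊆ Finset.univ.filter fun i : Fin d => (i : ℕ) < k :=
    Finset.insert_subset_iff.2 ⟨mem_filter_lt.2 (by omega),
      Finset.singleton_subset_iff.2 (mem_filter_lt.2 (by omega))⟩
  have hbx : btil x k = btil θ k := (sum_eq_bsum_iff_btil_eq hxtail).1 hxsum
  have hsum₂₁ : x K₂ + x K₁ ≤ btil θ k := by
    rw [← hbx, btil, ← Finset.sum_pair hne]
    exact Finset.sum_le_sum_of_subset_of_nonneg hpair fun i _ _ => hx.1 i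
  have hb₁ := btil_eq_btil_sub_one_add (x := θ) (by omega) hK₁
  have hb₂ := btil_eq_btil_sub_one_add (x := θ) (k := k - 1) (by omega)
    (by rw [hK₂]; omega)
  have hb₃ := le_btil hθ (m := k - 2) (by omega)
  rw [show k - 1 - 1 = k - 2 by omega] at hb₂
  push_cast [show 2 ≤ k by omega] at hb₃
  have hxK₁ : x K₁ ≤ θ K₁ :=
    le_of_mem_of_eq_above hx hxsum fun i hi => hxtail i (by rw [Fin.lt_def] at hi; omega)
  rw [uP_of_eq_sub_two hK₂, uP_of_eq_sub_one (by omega) hK₁]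
  rcases hxK₁.lt_or_eq with hlt | heq
  · refine lt_of_le_of_ne (by linarith) fun h => hxu (eq_of_sum_eq_btil hx.1
      (fun i hi => mem_filter_lt.1 (hpair hi)) ?_ ?_
      (fun i hi hi' => by
        simp only [Finset.mem_insert, Finset.mem_singleton, not_or] at hi'
        exact uP_of_lt hi hi'.1 hi'.2 hK₂ hK₁)
      fun i hi => by rw [hxtail i hi, uP_of_le (by omega) hi])
    · rw [Finset.sum_pair hne, hbx]; linarith
    · simp only [Finset.mem_insert, Finset.mem_singleton, forall_eq_or_imp, forall_eq,
        uP_of_eq_sub_two hK₂, uP_of_eq_sub_one (by omega) hK₁]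
      constructor <;> linarith
  · have hxK₂ : x K₂ ≤ θ K₂ := le_of_mem_of_eq_above hx hxsum fun i hi => by
      rcases eq_or_ne i K₁ with rfl | hi₁
      · exact heq
      · refine hxtail i ?_
        rw [Fin.lt_def] at hi
        have : (i : ℕ) ≠ k - 1 := fun h => hi₁ (Fin.ext (h.trans hK₁.symm))
        omega
    linarith

lemma uP_mem_extremePoints (hθ : ∀ i, 1 ≤ θ i) (hk3 : 3 ≤ k) (hk : k ≤ d) :
    toR (uP d θ k) ∈ (grlexP d θ).extremePoints ℝ := by
  obtain ⟨K₂, hK₂⟩ : ∃ K : Fin d, (K : ℕ) = k - 2 := ⟨⟨k - 2, by omega⟩, rfl⟩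
  obtain ⟨K₁, hK₁⟩ : ∃ K : Fin d, (K : ℕ) = k - 1 := ⟨⟨k - 1, by omega⟩, rfl⟩
  refine toR_mem_extremePoints_of_lexBelow
    (l := grlexFunctionals k (2 • LinearMap.proj K₂ + 3 • LinearMap.proj K₁))
    (uP_mem_grlexLower hθ (by omega) hK₂ hK₁) fun x hx hxu =>
      toR_mem_lexBelow_grlexFunctionals hx (sum_uP (by omega) hK₂ hK₁)
        (fun i => uP_of_le (by omega)) fun hxsum hxtail => ?_
  simpa using (Int.cast_lt (R := ℝ)).2
    (two_mul_add_three_mul_lt_uP hθ hk3 hK₂ hK₁ hx hxsum hxtail hxu)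

end VertexU

section Transfer

variable {d : ℕ}

def transfer (p q : Fin d) : Fin d → ℤ := Pi.single p 1 - Pi.single q 1

variable {x : Fin d → ℤ} {p q : Fin d}

@[simp] lemma sum_add_transfer : ∑ i, (x + transfer p q) i = ∑ i, x i := by
  simp [transfer, Finset.sum_add_distrib, Finset.sum_sub_distrib]

lemma add_transfer_apply_of_ne {i : Fin d} (hip : i ≠ p) (hiq : i ≠ q) :
    (x + transfer p q) i = x i := by
  simp [transfer, hip, hiq]

lemma add_transfer_apply_right (hpq : p ≠ q) : (x + transfer p q) q = x q - 1 := by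
  simp [transfer, hpq.symm, sub_eq_add_neg]

lemma add_transfer_apply_left (hpq : p ≠ q) : (x + transfer p q) p = x p + 1 := by
  simp [transfer, hpq]

lemma add_transfer_nonneg (hx : ∀ i, 0 ≤ x i) (hq : 1 ≤ x q) : ∀ i, 0 ≤ (x + transfer p q) i := by
  intro i
  rcases eq_or_ne p q with rfl | hpq
  · simpa [transfer] using hx i
  rcases eq_or_ne i q with rfl | hiq
  · rw [add_transfer_apply_right hpq]; omega
  rcases eq_or_ne i p with rfl | hip
  · rw [add_transfer_apply_left hpq]; linarith [hx i]
  · rw [add_transfer_apply_of_ne hip hiq]; exact hx i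

lemma sub_transfer : x - transfer p q = x + transfer q p := by
  simp only [transfer]; abel

end Transfer

section Classification

variable {d : ℕ} {θ x : Fin d → ℤ} {T : Fin d}

lemma eq_of_transfer_mem (hext : toR x ∈ (grlexP d θ).extremePoints ℝ)
    {p q : Fin d} (hpq : x + transfer p q ∈ grlexLower θ) (hqp : x + transfer q p ∈ grlexLower θ) :
    p = q := by
  by_contra hne
  have := congrFun (eq_zero_of_add_mem_of_sub_mem hext hpq (sub_transfer ▸ hqp)) p
  simp [transfer, hne] at this

lemma eq_zero_or_eq_wP_of_sum_lt (hθ : ∀ i, 1 ≤ θ i) (hx : x ∈ grlexLower θ)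
    (hext : toR x ∈ (grlexP d θ).extremePoints ℝ) (hlt : ∑ i, x i < bsum θ) :
    x = 0 ∨ x = wP d θ := by
  rcases eq_or_ne x 0 with rfl | hx0
  · exact Or.inl rfl
  have hpos : ∀ i, x i ≠ 0 → 1 ≤ x i := fun i hi => lt_of_le_of_ne (hx.1 i) (Ne.symm hi)
  obtain ⟨p, hp⟩ : ∃ p, x p ≠ 0 := Function.ne_iff.1 hx0
  have hsingle : x = Pi.single p (x p) := eq_pi_single_of_sum_eq hx.1 <|
    Fintype.sum_eq_single p fun q hqp => by
      by_contra hq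
      refine hqp (eq_of_transfer_mem hext ?_ ?_) <;>
        refine mem_grlexLower_of_sum_lt (add_transfer_nonneg hx.1 (hpos _ ‹_›)) ?_ <;>
        rwa [sum_add_transfer]
  rw [hsingle, Fintype.sum_pi_single'] at hlt
  have hup : Pi.single p (x p + 1) ∉ grlexLower θ := fun h => by
    have hdown : Pi.single p (x p - 1) ∈ grlexLower θ :=
      single_mem_grlexLower (by linarith [hpos p hp]) (by omega)
    have := congrFun (eq_zero_of_add_mem_of_sub_mem (δ := Pi.single p 1) hext
      (by rwa [hsingle, ← Pi.single_add]) (by rwa [hsingle, ← Pi.single_sub])) p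
    simp at this
  have hxp : x p = bsum θ - 1 := by
    by_contra h
    exact hup (single_mem_grlexLower (by linarith [hx.1 p]) (by omega))
  obtain ⟨L, hL⟩ : ∃ L : Fin d, (L : ℕ) = d - 1 := ⟨⟨d - 1, by have := p.isLt; omega⟩, rfl⟩
  have hpL : p = L := by
    by_contra hpL
    refine hup (mem_grlexLower_of_pivot (T := L)
      (single_nonneg (by linarith [hx.1 p]))
      (by rw [Fintype.sum_pi_single']; omega) ?_ fun i hi => ?_)
    · rw [Pi.single_eq_of_ne (Ne.symm hpL)]; linarith [hθ L]
    · rw [Fin.lt_def] at hi; omega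
  rw [wP_eq_single hL, hsingle, hxp, hpL]
  exact Or.inr rfl

lemma add_transfer_mem_of_pivot (hx : x ∈ grlexLower θ) (hsum : ∑ i, x i = bsum θ)
    (hT : x T < θ T) (habove : ∀ i, T < i → x i = θ i) {p q : Fin d} (hp : p < T) (hq : q < T)
    (hxq : 1 ≤ x q) : x + transfer p q ∈ grlexLower θ :=
  mem_grlexLower_of_pivot (add_transfer_nonneg hx.1 hxq) (by rw [sum_add_transfer, hsum])
    (by rwa [add_transfer_apply_of_ne hp.ne' hq.ne']) fun i hi => by
      rw [add_transfer_apply_of_ne (hp.trans hi).ne' (hq.trans hi).ne']; exact habove i hi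

lemma exists_unique_pos_below_pivot (hθ : ∀ i, 1 ≤ θ i) (hx : x ∈ grlexLower θ)
    (hext : toR x ∈ (grlexP d θ).extremePoints ℝ) (hsum : ∑ i, x i = bsum θ)
    (hT : x T < θ T) (habove : ∀ i, T < i → x i = θ i) :
    ∃ p < T, 1 ≤ x p ∧ ∀ i < T, i ≠ p → x i = 0 := by
  have hb := (sum_eq_bsum_iff_btil_eq (k := T + 1) fun i hi =>
    habove i (Fin.lt_def.2 (by omega))).1 hsum
  rw [btil_succ, btil_succ] at hb
  have hθT := le_btil hθ T.isLt.le
  obtain ⟨p, hp, hxp⟩ := Finset.exists_lt_of_sum_lt (f := 0) (g := x)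
    (s := Finset.univ.filter fun i : Fin d => (i : ℕ) < T) (by
      simp only [Pi.zero_apply, Finset.sum_const_zero]
      change 0 < btil x T
      omega)
  have hpT : p < T := Fin.lt_def.2 (mem_filter_lt.1 hp)
  refine ⟨p, hpT, hxp, fun q hqT hqp => ?_⟩
  by_contra hq
  exact hqp (eq_of_transfer_mem hext
    (add_transfer_mem_of_pivot hx hsum hT habove hqT hpT hxp)
    (add_transfer_mem_of_pivot hx hsum hT habove hpT hqT (lt_of_le_of_ne (hx.1 q) (Ne.symm hq))))

lemma add_eq_btil_of_pivot (hsum : ∑ i, x i = bsum θ) (habove : ∀ i, T < i → x i = θ i)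
    {p : Fin d} (hpT : p < T) (hzero : ∀ i < T, i ≠ p → x i = 0) :
    x p + x T = btil θ T + θ T := by
  have hb := (sum_eq_bsum_iff_btil_eq (k := T + 1) fun i hi =>
    habove i (Fin.lt_def.2 (by omega))).1 hsum
  rwa [btil_succ, btil_succ, btil, Finset.sum_eq_single_of_mem p (mem_filter_lt.2 hpT)
    fun i hi hip => hzero i (Fin.lt_def.2 (mem_filter_lt.1 hi)) hip] at hb

lemma add_transfer_eq_self_of_pivot_eq_one (hsum : ∑ i, x i = bsum θ)
    (habove : ∀ i, T < i → x i = θ i) {p : Fin d} (hpT : p < T)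
    (hzero : ∀ i < T, i ≠ p → x i = 0) (hT : (T : ℕ) = 1) (hxT : x T = θ T - 1) :
    x + transfer T p = θ := by
  have hpsum := add_eq_btil_of_pivot hsum habove hpT hzero
  have hp : (p : ℕ) = 0 := by rw [Fin.lt_def] at hpT; omega
  funext i
  rcases lt_trichotomy i T with hi | rfl | hi
  · obtain rfl : i = p := Fin.ext (by rw [Fin.lt_def] at hi; omega)
    have hb := btil_succ θ i
    rw [hp, show btil θ 0 = 0 by simp [btil], zero_add, zero_add, show 1 = (T : ℕ) from hT.symm]
      at hb
    rw [add_transfer_apply_right hpT.ne']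
    omega
  · rw [add_transfer_apply_left hpT.ne']; omega
  · rw [add_transfer_apply_of_ne hi.ne' (hpT.trans hi).ne']; exact habove i hi

/-- Moving a unit from the pivot `T` to `p` keeps `x` below `θ`; the reverse move can only break
the lexicographic condition if `x = u^{T+1}`. -/
lemma pivot_shape_of_pos (hθ : ∀ i, 1 ≤ θ i) (hx : x ∈ grlexLower θ)
    (hext : toR x ∈ (grlexP d θ).extremePoints ℝ) (hsum : ∑ i, x i = bsum θ) (hT : x T < θ T)
    (habove : ∀ i, T < i → x i = θ i) {p : Fin d} (hpT : p < T) (hxp : 1 ≤ x p)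
    (hzero : ∀ i < T, i ≠ p → x i = 0) (hxT : 1 ≤ x T) :
    x T = θ T - 1 ∧ (p : ℕ) + 1 = T ∧ 2 ≤ (T : ℕ) := by
  have hup : x + transfer p T ∈ grlexLower θ :=
    mem_grlexLower_of_pivot (add_transfer_nonneg hx.1 hxT) (by rw [sum_add_transfer, hsum])
      (by rw [add_transfer_apply_right hpT.ne]; omega) fun i hi => by
        rw [add_transfer_apply_of_ne (hpT.trans hi).ne' hi.ne']; exact habove i hi
  have hdown : ∀ T', (x + transfer T p) T' < θ T' →
      (∀ i, T' < i → (x + transfer T p) i = θ i) → False := fun T' h h' =>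
    hpT.ne (eq_of_transfer_mem hext hup (mem_grlexLower_of_pivot
      (add_transfer_nonneg hx.1 hxp) (by rw [sum_add_transfer, hsum]) h h'))
  have habove' : ∀ i, T < i → (x + transfer T p) i = θ i := fun i hi => by
    rw [add_transfer_apply_of_ne hi.ne' (hpT.trans hi).ne']; exact habove i hi
  have hxT' : x T = θ T - 1 := by
    by_contra h
    exact hdown T (by rw [add_transfer_apply_left hpT.ne']; omega) habove'
  refine ⟨hxT', ?_, ?_⟩
  · by_contra h
    obtain ⟨T', hT'⟩ : ∃ T' : Fin d, (T' : ℕ) = T - 1 := ⟨⟨T - 1, by omega⟩, rfl⟩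
    rw [Fin.lt_def] at hpT
    have hT'T : T' < T := Fin.lt_def.2 (by omega)
    have hT'p : T' ≠ p := fun h' => by rw [h'] at hT'; omega
    refine hdown T' ?_ fun i hi => ?_
    · rw [add_transfer_apply_of_ne hT'T.ne hT'p, hzero T' hT'T hT'p]
      exact hθ T'
    · rcases eq_or_ne i T with rfl | hiT
      · rw [add_transfer_apply_left (Fin.lt_def.2 hpT).ne']; omega
      · exact habove' i (Fin.lt_def.2 (by
          have : (i : ℕ) ≠ T := fun h => hiT (Fin.ext h)
          rw [Fin.lt_def] at hi; omega))
  · by_contra h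
    have heq := add_transfer_eq_self_of_pivot_eq_one hsum habove hpT hzero
      (by rw [Fin.lt_def] at hpT; omega) hxT'
    refine hpT.ne (eq_of_transfer_mem hext hup ?_)
    rw [heq]
    exact self_mem_grlexLower fun i => zero_le_one.trans (hθ i)

lemma exists_uP_or_vP_of_pivot (hθ : ∀ i, 1 ≤ θ i) (hx : x ∈ grlexLower θ)
    (hext : toR x ∈ (grlexP d θ).extremePoints ℝ) (hsum : ∑ i, x i = bsum θ)
    (hT : x T < θ T) (habove : ∀ i, T < i → x i = θ i) :
    (∃ k, 3 ≤ k ∧ k ≤ d ∧ x = uP d θ k) ∨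
      ∃ j k, 1 ≤ j ∧ j < k ∧ k ≤ d ∧ x = vP d θ j k := by
  obtain ⟨p, hpT, hxp, hzero⟩ := exists_unique_pos_below_pivot hθ hx hext hsum hT habove
  have hpsum := add_eq_btil_of_pivot hsum habove hpT hzero
  have hlow : ∀ i : Fin d, (i : ℕ) ≤ T → i ≠ p → i ≠ T → x i = 0 := fun i hiT hip hiT' =>
    hzero i (lt_of_le_of_ne (Fin.le_def.2 hiT) hiT') hip
  have hhigh : ∀ i : Fin d, T + 1 ≤ (i : ℕ) → x i = θ i := fun i hi =>
    habove i (Fin.lt_def.2 (by omega))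
  rw [Fin.lt_def] at hpT
  rcases (hx.1 T).eq_or_lt with hxT | hxT
  · refine Or.inr ⟨p + 1, T + 1, by omega, by omega, T.isLt, funext fun i => ?_⟩
    simp only [vP, Nat.add_sub_cancel]
    split_ifs with hip hiT
    · rw [Fin.ext hip, btil_succ]; omega
    · exact hhigh i hiT
    · rcases eq_or_ne i T with rfl | hiT'
      · exact hxT.symm
      · exact hlow i (by omega) (fun h => hip (h ▸ rfl)) hiT'
  · obtain ⟨hxT', hpT', hT2⟩ :=
      pivot_shape_of_pos hθ hx hext hsum hT habove (Fin.lt_def.2 hpT) hxp hzero hxT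
    refine Or.inl ⟨T + 1, by omega, T.isLt, funext fun i => ?_⟩
    simp only [uP, show (T : ℕ) + 1 - 2 = p by omega, Nat.add_sub_cancel]
    split_ifs with hip hiT hiT'
    · rw [Fin.ext hip]; omega
    · rw [Fin.ext hiT, hxT']
    · exact hhigh i hiT'
    · exact hlow i (by omega) (fun h => hip (h ▸ rfl)) fun h => hiT (h ▸ rfl)

end Classification

/-- The vertices of the grlex polytope `P` are exactly `0`, `θ`,
`w = (b-1)e_d`, the points `u^k` for `3 ≤ k ≤ d`, and the points `v^{j,k}` for
`1 ≤ j < k ≤ d`. -/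
theorem grlexP_extremePoints (d : ℕ) (hd : 3 ≤ d) (θ : Fin d → ℤ) (hθ : ∀ i, 1 ≤ θ i) :
    (grlexP d θ).extremePoints ℝ =
      {(0 : Fin d → ℝ), toR θ, toR (wP d θ)} ∪
        {p | ∃ k : ℕ, 3 ≤ k ∧ k ≤ d ∧ p = toR (uP d θ k)} ∪
        {p | ∃ j k : ℕ, 1 ≤ j ∧ j < k ∧ k ≤ d ∧ p = toR (vP d θ j k)} := by
  ext p
  constructor
  · intro hp
    obtain ⟨x, hx, rfl⟩ : p ∈ toR '' grlexLower θ :=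
      extremePoints_convexHull_subset (grlexP_eq_convexHull_image (θ := θ) ▸ hp)
    rcases (sum_le_bsum_of_mem hx).lt_or_eq with hlt | heq
    · rcases eq_zero_or_eq_wP_of_sum_lt hθ hx hp hlt with rfl | rfl <;> simp
    rcases eq_or_ne x θ with rfl | hne
    · simp
    obtain ⟨T, hT, habove⟩ := exists_pivot_of_mem hx heq hne
    rcases exists_uP_or_vP_of_pivot hθ hx hp heq hT habove with
      ⟨k, hk3, hk, rfl⟩ | ⟨j, k, hj, hjk, hk, rfl⟩
    · exact Or.inl (Or.inr ⟨k, hk3, hk, rfl⟩)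
    · exact Or.inr ⟨j, k, hj, hjk, hk, rfl⟩
  · rintro (((rfl | rfl | rfl) | ⟨k, hk3, hk, rfl⟩) | ⟨j, k, hj, hjk, hk, rfl⟩)
    · exact zero_mem_extremePoints hθ (by omega)
    · exact self_mem_extremePoints hθ
    · exact wP_mem_extremePoints hθ hd
    · exact uP_mem_extremePoints hθ hk3 hk
    · exact vP_mem_extremePoints hθ hj hjk hk
end

section
/- Suppose cx ≤ c_0 is valid for the grlex polytope P and F = P ∩ {x : cx = c_0} is a face of P. If F is not contained in the hyperplane {x_{i+1} = 0} for some 1 ≤ i ≤ d-1, then c_{i+1} ≥ max{c_i, 0}. Consequently, for any nontrivial facet (one not given by a coordinate plane), 0 ≤ c_1 ≤ c_2 ≤ ... ≤ c_d. -/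
open Set Finset

/-! A face of `P` not contained in `{x_j = 0}` contains an integer point `x` of the generating
set with `x_j ≥ 1`. Both `x - e_j` (smaller degree) and, for `i < j`, `x + e_i - e_j` (same
degree, lex-smaller) are again grlex-below `θ`, so the valid inequality `c x ≤ c₀`, tight at
`x`, yields `c_j ≥ 0` and `c_i ≤ c_j`. -/

theorem convexHull_inter_level_subset {𝕜 E : Type*} [CommRing 𝕜] [LinearOrder 𝕜]
    [IsStrictOrderedRing 𝕜] [AddCommGroup E] [Module 𝕜 E] {S T : Set E} (hT : Convex 𝕜 T)
    (f : E →ₗ[𝕜] 𝕜) {c₀ : 𝕜} (hS : ∀ x ∈ S, f x ≤ c₀) (hST : ∀ x ∈ S, f x = c₀ → x ∈ T) :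
    convexHull 𝕜 S ∩ {x | f x = c₀} ⊆ T := by
  -- a proper convex combination reaches the level `c₀` only if both endpoints do
  have hK : Convex 𝕜 {x | f x ≤ c₀ ∧ (f x = c₀ → x ∈ T)} := by
    rintro x ⟨hx, hxT⟩ y ⟨hy, hyT⟩ a b ha hb hab
    have hcombo : f (a • x + b • y) = a * f x + b * f y := by simp
    have hax := mul_le_mul_of_nonneg_left hx ha
    have hby := mul_le_mul_of_nonneg_left hy hb
    have hc₀ : a * c₀ + b * c₀ = c₀ := by rw [← add_mul, hab, one_mul]
    refine ⟨by rw [hcombo]; linarith, fun h => ?_⟩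
    rw [hcombo] at h
    rcases ha.eq_or_lt with rfl | ha
    · obtain rfl : b = 1 := by simpa using hab
      simpa using hyT (by simpa using h)
    rcases hb.eq_or_lt with rfl | hb
    · obtain rfl : a = 1 := by simpa using hab
      simpa using hxT (by simpa using h)
    have hfx : f x = c₀ := mul_left_cancel₀ ha.ne' (by linarith)
    have hfy : f y = c₀ := mul_left_cancel₀ hb.ne' (by linarith)
    exact hT (hxT hfx) (hyT hfy) ha.le hb.le hab
  rintro x ⟨hx, hfx⟩
  exact (convexHull_min (fun y hy => (⟨hS y hy, hST y hy⟩ : _ ∧ _)) hK hx).2 hfx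

section GrlexOrder

variable {d : ℕ} {x y z : Fin d → ℤ}

theorem lexLe_trans (hxy : lexLe x y) (hyz : lexLe y z) : lexLe x z := by
  rcases hxy with rfl | ⟨i, hi, hxy⟩
  · exact hyz
  rcases hyz with rfl | ⟨j, hj, hyz⟩
  · exact Or.inr ⟨i, hi, hxy⟩
  right
  rcases lt_or_ge j i with hji | hij
  · exact ⟨i, hi.trans_eq (hyz i hji), fun k hk => (hxy k hk).trans (hyz k (hji.trans hk))⟩
  refine ⟨j, ?_, fun k hk => (hxy k (hij.trans_lt hk)).trans (hyz k hk)⟩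
  rcases hij.eq_or_lt with rfl | hij
  · exact hi.trans hj
  · exact (hxy j hij).trans_lt hj

theorem grlexLe_trans (hxy : grlexLe x y) (hyz : grlexLe y z) : grlexLe x z := by
  rcases hxy with hxy | ⟨hxy, hxy'⟩ <;> rcases hyz with hyz | ⟨hyz, hyz'⟩
  · exact Or.inl (hxy.trans hyz)
  · exact Or.inl (hxy.trans_eq hyz)
  · exact Or.inl (hxy.trans_lt hyz)
  · exact Or.inr ⟨hxy.trans hyz, lexLe_trans hxy' hyz'⟩

theorem grlexLe_sub_single (x : Fin d → ℤ) (j : Fin d) : grlexLe (x - Pi.single j 1) x :=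
  Or.inl (by simp [Finset.sum_sub_distrib])

theorem grlexLe_add_single_sub_single (x : Fin d → ℤ) {i j : Fin d} (hij : i < j) :
    grlexLe (x + Pi.single i 1 - Pi.single j 1) x :=
  Or.inr ⟨by simp [Finset.sum_add_distrib, Finset.sum_sub_distrib],
    Or.inr ⟨j, by simp [hij.ne'], fun k hk => by simp [hk.ne', (hij.trans hk).ne']⟩⟩

end GrlexOrder

section Coefficients

variable {d : ℕ} {θ x : Fin d → ℤ} {c : Fin d → ℝ} {c0 : ℝ}

@[simp] theorem toR_add (x y : Fin d → ℤ) : toR (x + y) = toR x + toR y := by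
  ext; simp [toR]

@[simp] theorem toR_sub (x y : Fin d → ℤ) : toR (x - y) = toR x - toR y := by
  ext; simp [toR]

@[simp] theorem toR_single (i : Fin d) (n : ℤ) : toR (Pi.single i n) = Pi.single i (n : ℝ) := by
  ext k; by_cases h : k = i <;> simp [toR, h]

theorem toR_mem_grlexP (hx0 : ∀ i, 0 ≤ x i) (hxθ : grlexLe x θ) : toR x ∈ grlexP d θ :=
  subset_convexHull ℝ _ ⟨x, hx0, hxθ, rfl⟩

theorem grlexP_exists_generator_of_not_subset (hvalid : ∀ p ∈ grlexP d θ, c ⬝ᵥ p ≤ c0)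
    {j : Fin d} (hj : ¬ grlexP d θ ∩ {p | c ⬝ᵥ p = c0} ⊆ {p | p j = 0}) :
    ∃ x : Fin d → ℤ, (∀ i, 0 ≤ x i) ∧ grlexLe x θ ∧ c ⬝ᵥ toR x = c0 ∧ 1 ≤ x j := by
  by_contra! h
  refine hj (convexHull_inter_level_subset (convex_hyperplane (LinearMap.proj j).isLinear 0)
    (dotProductEquiv ℝ (Fin d) c) ?_ ?_)
  · rintro _ ⟨x, hx0, hxθ, rfl⟩
    exact hvalid _ (toR_mem_grlexP hx0 hxθ)
  · rintro _ ⟨x, hx0, hxθ, rfl⟩ hxc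
    have hxj : x j = 0 := le_antisymm (Int.lt_add_one_iff.1 (h x hx0 hxθ hxc)) (hx0 j)
    simp [toR, hxj]

theorem grlexP_dotProduct_toR_le_of_grlexLe (hvalid : ∀ p ∈ grlexP d θ, c ⬝ᵥ p ≤ c0)
    (hxθ : grlexLe x θ) {y : Fin d → ℤ} (hy0 : ∀ i, 0 ≤ y i) (hyx : grlexLe y x) :
    c ⬝ᵥ toR y ≤ c0 :=
  hvalid _ (toR_mem_grlexP hy0 (grlexLe_trans hyx hxθ))

theorem grlexP_coeff_nonneg_of_generator (hvalid : ∀ p ∈ grlexP d θ, c ⬝ᵥ p ≤ c0)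
    (hx0 : ∀ i, 0 ≤ x i) (hxθ : grlexLe x θ) (hxc : c ⬝ᵥ toR x = c0) {j : Fin d}
    (hxj : 1 ≤ x j) : 0 ≤ c j := by
  have hy0 : ∀ k, 0 ≤ (x - Pi.single j 1 : Fin d → ℤ) k := fun k => by
    by_cases h : k = j <;> simp [h, hx0 k, hxj]
  have := grlexP_dotProduct_toR_le_of_grlexLe hvalid hxθ hy0 (grlexLe_sub_single x j)
  simp only [toR_sub, toR_single, dotProduct_sub, dotProduct_single, Int.cast_one,
    mul_one] at this
  linarith

theorem grlexP_coeff_le_of_generator (hvalid : ∀ p ∈ grlexP d θ, c ⬝ᵥ p ≤ c0)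
    (hx0 : ∀ k, 0 ≤ x k) (hxθ : grlexLe x θ) (hxc : c ⬝ᵥ toR x = c0) {i j : Fin d}
    (hij : i < j) (hxj : 1 ≤ x j) : c i ≤ c j := by
  have hy0 : ∀ k, 0 ≤ (x + Pi.single i 1 - Pi.single j 1 : Fin d → ℤ) k := fun k => by
    by_cases hi : k = i
    · subst hi; simp [hij.ne, Int.le_add_one (hx0 k)]
    by_cases hj : k = j
    · subst hj; simp [hij.ne', hxj]
    · simp [hi, hj, hx0 k]
  have :=
    grlexP_dotProduct_toR_le_of_grlexLe hvalid hxθ hy0 (grlexLe_add_single_sub_single x hij)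
  simp only [toR_sub, toR_add, toR_single, dotProduct_sub, dotProduct_add,
    dotProduct_single, Int.cast_one, mul_one] at this
  linarith

theorem grlexP_coeff_of_not_subset (hvalid : ∀ p ∈ grlexP d θ, c ⬝ᵥ p ≤ c0) {j : Fin d}
    (hj : ¬ grlexP d θ ∩ {p | c ⬝ᵥ p = c0} ⊆ {p | p j = 0}) :
    0 ≤ c j ∧ ∀ i < j, c i ≤ c j := by
  obtain ⟨x, hx0, hxθ, hxc, hxj⟩ := grlexP_exists_generator_of_not_subset hvalid hj
  exact ⟨grlexP_coeff_nonneg_of_generator hvalid hx0 hxθ hxc hxj,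
    fun i hij => grlexP_coeff_le_of_generator hvalid hx0 hxθ hxc hij hxj⟩

end Coefficients

/-- monotonicity of coefficients of supporting hyperplanes of the grlex
polytope `P`.  (Paper coordinates are 1-indexed; here index `i : ℕ` with `i + 1 < d`
corresponds to the paper's pair of coordinates `(i+1, i+2)`.)  If the face
`F = P ∩ {x : cx = c₀}` is not contained in `{x_{i+1} = 0}` (0-indexed), then
`c_{i+1} ≥ max{c_i, 0}`; consequently the coefficients of a nontrivial facet satisfy
`0 ≤ c_1 ≤ c_2 ≤ … ≤ c_d`. -/
theorem grlexP_monotone_coefficients (d : ℕ) (θ : Fin d → ℤ)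
    (c : Fin d → ℝ) (c0 : ℝ)
    (hvalid : ∀ x ∈ grlexP d θ, ∑ i, c i * x i ≤ c0)
    (F : Set (Fin d → ℝ)) (hF : F = grlexP d θ ∩ {x | ∑ i, c i * x i = c0}) :
    (∀ i : ℕ, ∀ hi : i + 1 < d,
      ¬ F ⊆ {x | x ⟨i + 1, hi⟩ = 0} →
        max (c ⟨i, by omega⟩) 0 ≤ c ⟨i + 1, hi⟩) ∧
    ((IsFacet (grlexP d θ) F ∧ ∀ i : Fin d, ¬ F ⊆ {x | x i = 0}) →
      ∀ i j : Fin d, i ≤ j → 0 ≤ c i ∧ c i ≤ c j) := by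
  subst hF
  have key := fun j => grlexP_coeff_of_not_subset (j := j) hvalid
  refine ⟨fun i hi hi' => ?_, fun ⟨_, hnt⟩ i j hij => ⟨(key i (hnt i)).1, ?_⟩⟩
  · obtain ⟨h0, hmono⟩ := key _ hi'
    exact max_le (hmono _ (Fin.mk_lt_mk.2 i.lt_succ_self)) h0
  · rcases hij.eq_or_lt with rfl | hlt
    · exact le_rfl
    · exact (key j (hnt j)).2 i hlt
end
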